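/- arXiv:1312.5152 — 2 statements merged into one kernel-verified Lean document; each statement's English description precedes it below -/
import Mathlib

section
/- Let n ≥ 3 and 1 ≤ l < k be integers with 2k+1 ≤ n−1, and let κ ∈ ℝ^{n−1} satisfy κ_p ≥ 1 for all p. Let ã_0, …, ã_{l−1} and b̃_l, …, b̃_k be nonnegative real numbers such that Σ_{i=0}^{l−1} ã_i L̃_i(κ) = Σ_{j=l}^{k} b̃_j L̃_j(κ) > 0. Then Σ_{i=0}^{l−1} ã_i Ñ_i(κ) ≥ Σ_{j=l}^{k} b̃_j Ñ_j(κ). -/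
/-!
Write `κ = y + 1` with `y ≥ 0`. Since `H_j(y + 1) = ∑_r C(j, r) H_r(y)`, we get
`L̃_a(κ) = ∑_r c_a(r) H_r(y)` and `Ñ_a(κ) - L̃_a(κ) = ∑_r c_a(r) H_{r+1}(y)`, where `c_a(r)` are
the coefficients of `((X + 1)² - 1)^a = X^a (X + 2)^a`. For `a ≤ b` the ratio `c_b / c_a` is
nondecreasing in `r`, while by the generalized Newton inequality `H_r H_{s+1} ≤ H_{r+1} H_s`
(`r ≤ s`, proved by induction on the number of variables) the ratio `H_{r+1} / H_r` is
nonincreasing. A Chebyshev-type rearrangement then gives `Ñ_b L̃_a ≤ Ñ_a L̃_b` whenever `a ≤ b`,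
and multiplying out `(∑ b_j Ñ_j) (∑ a_i L̃_i)` with `∑ a_i L̃_i = ∑ b_j L̃_j > 0` gives the claim.
-/

/-- The `k`-th elementary symmetric polynomial of `x ∈ ℝ^m`
(`σ_0 = 1`, `σ_k = 0` for `k > m`). -/
noncomputable def esymmR (m : ℕ) (x : Fin m → ℝ) (k : ℕ) : ℝ :=
  ∑ s ∈ Finset.powersetCard k (Finset.univ : Finset (Fin m)), ∏ i ∈ s, x i

/-- The normalized `k`-th elementary symmetric function `H_k = σ_k / C(m,k)`
(`H_0 = 1`, `H_k = 0` for `k > m`). -/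
noncomputable def Hnorm (m : ℕ) (x : Fin m → ℝ) (k : ℕ) : ℝ :=
  esymmR m x k / (m.choose k : ℝ)

/-- The point of `ℝ^{m-1}` obtained from `x ∈ ℝ^m` by deleting the `p`-th coordinate. -/
def deleteCoord {m : ℕ} (x : Fin m → ℝ) (p : Fin m) : Fin (m - 1) → ℝ :=
  fun i => if (i : ℕ) < (p : ℕ) then x ⟨(i : ℕ), by have := i.isLt; omega⟩
           else x ⟨(i : ℕ) + 1, by have := i.isLt; omega⟩

/-- `L̃_k(κ) = Σ_{i=0}^{k} C(k,i) (−1)^{k−i} H_{2i}(κ)`, the normalized intrinsic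
Gauss-Bonnet curvature quantity in hyperbolic space. -/
noncomputable def Ltil (m : ℕ) (x : Fin m → ℝ) (k : ℕ) : ℝ :=
  ∑ i ∈ Finset.range (k + 1), (k.choose i : ℝ) * (-1 : ℝ) ^ (k - i) * Hnorm m x (2 * i)

/-- `Ñ_k(κ) = Σ_{i=0}^{k} C(k,i) (−1)^{k−i} H_{2i+1}(κ)`. -/
noncomputable def Ntil (m : ℕ) (x : Fin m → ℝ) (k : ℕ) : ℝ :=
  ∑ i ∈ Finset.range (k + 1), (k.choose i : ℝ) * (-1 : ℝ) ^ (k - i) * Hnorm m x (2 * i + 1)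

open Polynomial Finset

section ElementarySymmetric

variable {m : ℕ}

theorem prod_C_mul_X_add (x : Fin m → ℝ) (Z : ℝ[X]) :
    ∏ p, (C (x p) * X + Z) = ∑ r ∈ range (m + 1), C (esymmR m x r) * X ^ r * Z ^ (m - r) := by
  rw [prod_add, sum_powerset, card_univ, Fintype.card_fin]
  refine sum_congr rfl fun r _ => ?_
  rw [esymmR, map_sum, sum_mul, sum_mul]
  refine sum_congr rfl fun t ht => ?_
  rw [mem_powersetCard_univ] at ht
  rw [prod_mul_distrib, prod_const, prod_const, card_univ_sdiff, Fintype.card_fin, ht, map_prod]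

theorem esymmR_eq_zero (x : Fin m → ℝ) {k : ℕ} (h : m < k) : esymmR m x k = 0 := by
  rw [esymmR, powersetCard_eq_empty.2 (by simpa using h), sum_empty]

theorem esymmR_eq_coeff (x : Fin m → ℝ) (k : ℕ) :
    esymmR m x k = (∏ p, (C (x p) * X + 1)).coeff k := by
  simp only [prod_C_mul_X_add, one_pow, mul_one, finsetSum_coeff, coeff_C_mul_X_pow]
  rw [sum_ite_eq]
  split_ifs with hk
  · rfl
  · exact esymmR_eq_zero x (by simpa using hk)

theorem esymmR_zero (x : Fin m → ℝ) : esymmR m x 0 = 1 := by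
  simp [esymmR]

theorem esymmR_nonneg {x : Fin m → ℝ} (hx : ∀ p, 0 ≤ x p) (k : ℕ) : 0 ≤ esymmR m x k :=
  sum_nonneg fun _ _ => prod_nonneg fun i _ => hx i

theorem esymmR_succ (x : Fin (m + 1) → ℝ) (j : ℕ) :
    esymmR (m + 1) x (j + 1) =
      esymmR m (x ∘ Fin.castSucc) (j + 1) + x (Fin.last m) * esymmR m (x ∘ Fin.castSucc) j := by
  simp only [esymmR_eq_coeff, Fin.prod_univ_castSucc, Function.comp_apply]
  rw [mul_add, mul_one, coeff_add, mul_comm _ (C _ * X), mul_assoc, coeff_C_mul, coeff_X_mul]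
  ring

theorem esymmR_succ_eq_zero {x : Fin m → ℝ} (hx : ∀ p, 0 ≤ x p) {j : ℕ}
    (h : esymmR m x j = 0) : esymmR m x (j + 1) = 0 := by
  induction m generalizing j with
  | zero => exact esymmR_eq_zero x (by omega)
  | succ m ih =>
    obtain _ | j := j
    · simp [esymmR_zero] at h
    have hx' : ∀ p, 0 ≤ (x ∘ Fin.castSucc) p := fun p => hx _
    rw [esymmR_succ] at h ⊢
    have h₁ : esymmR m (x ∘ Fin.castSucc) (j + 1) = 0 :=
      ((add_eq_zero_iff_of_nonneg (esymmR_nonneg hx' _)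
        (mul_nonneg (hx _) (esymmR_nonneg hx' _))).1 h).1
    rw [h₁, ih hx' h₁, zero_add, mul_zero]

end ElementarySymmetric

section Normalized

variable {m : ℕ}

theorem Hnorm_zero (x : Fin m → ℝ) : Hnorm m x 0 = 1 := by
  simp [Hnorm, esymmR_zero]

theorem Hnorm_eq_zero (x : Fin m → ℝ) {k : ℕ} (h : m < k) : Hnorm m x k = 0 := by
  simp [Hnorm, esymmR_eq_zero x h]

theorem Hnorm_nonneg {x : Fin m → ℝ} (hx : ∀ p, 0 ≤ x p) (k : ℕ) : 0 ≤ Hnorm m x k :=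
  div_nonneg (esymmR_nonneg hx k) (Nat.cast_nonneg _)

theorem esymmR_eq_choose_mul_Hnorm (x : Fin m → ℝ) (k : ℕ) :
    esymmR m x k = m.choose k * Hnorm m x k := by
  rcases le_or_gt k m with hk | hk
  · have : (m.choose k : ℝ) ≠ 0 := Nat.cast_ne_zero.2 (Nat.choose_pos hk).ne'
    rw [Hnorm, mul_div_cancel₀ _ this]
  · rw [esymmR_eq_zero x hk, Hnorm_eq_zero x hk, mul_zero]

theorem Hnorm_succ_eq_zero {x : Fin m → ℝ} (hx : ∀ p, 0 ≤ x p) {j : ℕ}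
    (h : Hnorm m x j = 0) : Hnorm m x (j + 1) = 0 := by
  rcases le_or_gt j m with hj | hj
  · rw [Hnorm, esymmR_succ_eq_zero hx, zero_div]
    rw [esymmR_eq_choose_mul_Hnorm, h, mul_zero]
  · exact Hnorm_eq_zero x (by omega)

theorem Hnorm_succ (x : Fin (m + 1) → ℝ) (j : ℕ) :
    ((m : ℝ) + 1) * Hnorm (m + 1) x j =
      ((m : ℝ) + 1 - j) * Hnorm m (x ∘ Fin.castSucc) j
        + j * x (Fin.last m) * Hnorm m (x ∘ Fin.castSucc) (j - 1) := by
  obtain _ | j := j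
  · simp [Hnorm_zero]
  rcases lt_or_ge m j with hj | hj
  · simp [Hnorm_eq_zero _ (show m + 1 < j + 1 by omega), Hnorm_eq_zero _ hj,
      Hnorm_eq_zero _ (show m < j + 1 by omega)]
  have hC : ((m + 1).choose (j + 1) : ℝ) ≠ 0 := Nat.cast_ne_zero.2 (Nat.choose_pos (by omega)).ne'
  have h₁ : ((m.choose (j + 1) * (m + 1) : ℕ) : ℝ) = ((m + 1).choose (j + 1) * (m - j) : ℕ) := by
    rw [Nat.choose_mul_succ_eq, Nat.add_sub_add_right]
  have h₂ : (((m + 1) * m.choose j : ℕ) : ℝ) = ((m + 1).choose (j + 1) * (j + 1) : ℕ) :=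
    congrArg _ (Nat.add_one_mul_choose_eq m j)
  push_cast [Nat.cast_sub hj] at h₁ h₂ ⊢
  rw [Hnorm, esymmR_succ, esymmR_eq_choose_mul_Hnorm _ (j + 1), esymmR_eq_choose_mul_Hnorm _ j]
  field_simp
  linear_combination (Hnorm m (x ∘ Fin.castSucc) (j + 1)) * h₁
    + x (Fin.last m) * Hnorm m (x ∘ Fin.castSucc) j * h₂

end Normalized

theorem mul_succ_le_of_sq_le {h : ℕ → ℝ} (h_nonneg : ∀ j, 0 ≤ h j)
    (h_zero : ∀ j, h j = 0 → h (j + 1) = 0) (h_sq : ∀ j, h j * h (j + 2) ≤ h (j + 1) ^ 2)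
    {r s : ℕ} (hrs : r ≤ s) : h r * h (s + 1) ≤ h (r + 1) * h s := by
  induction s, hrs using Nat.le_induction with
  | base => rw [mul_comm]
  | succ s _ ih =>
    rcases (h_nonneg (s + 1)).eq_or_lt with h₀ | hpos
    · rw [h_zero _ h₀.symm, ← h₀, mul_zero, mul_zero]
    have hs : 0 < h s := (h_nonneg s).lt_of_ne fun h₀ => hpos.ne' (h_zero s h₀.symm)
    refine le_of_mul_le_mul_left ?_ hs
    calc h s * (h r * h (s + 1 + 1)) = h r * (h s * h (s + 2)) := by ring
      _ ≤ h r * h (s + 1) ^ 2 := mul_le_mul_of_nonneg_left (h_sq s) (h_nonneg r)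
      _ = h r * h (s + 1) * h (s + 1) := by ring
      _ ≤ h (r + 1) * h s * h (s + 1) := mul_le_mul_of_nonneg_right ih hpos.le
      _ = h s * (h (r + 1) * h (s + 1)) := by ring

theorem Hnorm_mul_Hnorm_add_two_le {m : ℕ} {x : Fin (m + 1) → ℝ} (hx : ∀ p, 0 ≤ x p)
    (hG : ∀ r s, r ≤ s → Hnorm m (x ∘ Fin.castSucc) r * Hnorm m (x ∘ Fin.castSucc) (s + 1) ≤
      Hnorm m (x ∘ Fin.castSucc) (r + 1) * Hnorm m (x ∘ Fin.castSucc) s) (r : ℕ) :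
    Hnorm (m + 1) x r * Hnorm (m + 1) x (r + 2) ≤ Hnorm (m + 1) x (r + 1) ^ 2 := by
  rcases lt_or_ge (m + 1) (r + 2) with hr | hr
  · rw [Hnorm_eq_zero x hr, mul_zero]
    positivity
  have e₀ := Hnorm_succ x r
  have e₁ := Hnorm_succ x (r + 1)
  have e₂ := Hnorm_succ x (r + 2)
  simp only [Nat.add_sub_cancel, show r + 2 - 1 = r + 1 by omega] at e₁ e₂
  push_cast at e₀ e₁ e₂
  have hM : (r : ℝ) + 2 ≤ m + 1 := by exact_mod_cast hr
  set H := Hnorm (m + 1) x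
  set G := Hnorm m (x ∘ Fin.castSucc)
  set t := x (Fin.last m)
  set M : ℝ := m + 1
  have hG₀ : G r * G (r + 2) ≤ G (r + 1) * G (r + 1) := hG r (r + 1) r.le_succ
  have hG₁ : 0 ≤ (r : ℝ) * (G r * G (r + 1) - G (r - 1) * G (r + 2)) := by
    obtain _ | r := r
    · simp
    simp only [Nat.add_sub_cancel]
    exact mul_nonneg (by positivity) (sub_nonneg.2 (hG r (r + 2) (by omega)))
  have hG₂ : 0 ≤ (r : ℝ) * (G r * G r - G (r - 1) * G (r + 1)) := by
    obtain _ | r := r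
    · simp
    simp only [Nat.add_sub_cancel]
    exact mul_nonneg (by positivity) (sub_nonneg.2 (hG r (r + 1) (by omega)))
  -- Expanding with `Hnorm_succ`, the defect is a sum of the three defects in `m` variables
  -- with nonnegative weights plus the square `(G (r + 1) - t G r)²`.
  have key : M ^ 2 * (H (r + 1) ^ 2 - H r * H (r + 2))
      = (M - r) * (M - r - 2) * (G (r + 1) * G (r + 1) - G r * G (r + 2))
        + (M - r - 2) * t * (r * (G r * G (r + 1) - G (r - 1) * G (r + 2)))
        + (r + 2) * t ^ 2 * (r * (G r * G r - G (r - 1) * G (r + 1)))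
        + (G (r + 1) - t * G r) ^ 2 := by
    linear_combination (M * H (r + 1) + (M - (r + 1)) * G (r + 1) + (r + 1) * t * G r) * e₁
      - M * H (r + 2) * e₀ - ((M - r) * G r + r * t * G (r - 1)) * e₂
  have ht : 0 ≤ t := hx _
  have : 0 ≤ M ^ 2 * (H (r + 1) ^ 2 - H r * H (r + 2)) := by
    rw [key]
    have : 0 ≤ M - r - 2 := by linarith
    have : 0 ≤ M - r := by linarith
    have := sub_nonneg.2 hG₀
    positivity
  have hM₀ : 0 < M ^ 2 := pow_pos (by linarith [r.cast_nonneg (α := ℝ)]) 2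
  exact sub_nonneg.1 ((mul_nonneg_iff_of_pos_left hM₀).1 this)

theorem Hnorm_mul_Hnorm_succ_le {m : ℕ} {x : Fin m → ℝ} (hx : ∀ p, 0 ≤ x p) {r s : ℕ}
    (hrs : r ≤ s) : Hnorm m x r * Hnorm m x (s + 1) ≤ Hnorm m x (r + 1) * Hnorm m x s := by
  induction m generalizing r s with
  | zero =>
    rw [Hnorm_eq_zero x s.succ_pos, mul_zero]
    exact mul_nonneg (Hnorm_nonneg hx _) (Hnorm_nonneg hx _)
  | succ m ih =>
    exact mul_succ_le_of_sq_le (Hnorm_nonneg hx) (fun _ => Hnorm_succ_eq_zero hx)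
      (Hnorm_mul_Hnorm_add_two_le hx fun _ _ => ih fun _ => hx _) hrs

section Shift

variable {m : ℕ}

theorem esymmR_add_one (y : Fin m → ℝ) (j : ℕ) :
    esymmR m (fun p => y p + 1) j =
      ∑ r ∈ range (m + 1), (if r ≤ j then ((m - r).choose (j - r) : ℝ) else 0) * esymmR m y r := by
  have : ∏ p, (C (y p + 1) * X + 1) = ∏ p, (C (y p) * X + (X + 1)) :=
    prod_congr rfl fun p _ => by rw [C_add, C_1]; ring
  rw [esymmR_eq_coeff, this, prod_C_mul_X_add, finsetSum_coeff]
  refine sum_congr rfl fun r _ => ?_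
  rw [mul_assoc, coeff_C_mul, coeff_X_pow_mul', mul_comm]
  split_ifs <;> simp [coeff_X_add_one_pow]

theorem Hnorm_add_one (y : Fin m → ℝ) {j : ℕ} (hj : j ≤ m) :
    Hnorm m (fun p => y p + 1) j = ∑ r ∈ range (m + 1), (j.choose r : ℝ) * Hnorm m y r := by
  rw [Hnorm, esymmR_add_one, sum_div]
  refine sum_congr rfl fun r hr => ?_
  split_ifs with hrj
  · have hmr : r ≤ m := by simpa [Nat.lt_succ_iff] using hr
    have h := congrArg (Nat.cast : ℕ → ℝ) (Nat.choose_mul (n := m) hrj)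
    have hj₀ : (m.choose j : ℝ) ≠ 0 := Nat.cast_ne_zero.2 (Nat.choose_pos hj).ne'
    have hr₀ : (m.choose r : ℝ) ≠ 0 := Nat.cast_ne_zero.2 (Nat.choose_pos hmr).ne'
    push_cast at h
    rw [Hnorm]
    field_simp
    linear_combination esymmR m y r * h.symm
  · rw [Nat.choose_eq_zero_of_lt (not_le.1 hrj)]
    simp

end Shift

section Umbral

variable {m : ℕ}

/-- The linear functional on `ℝ[X]` sending `X ^ r` to `H_r(y)`; the cut-off at `r = m` loses
nothing since `H_r = 0` beyond. It sends `(X + 1) ^ j` to `H_j(y + 1)`. -/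
noncomputable def umbralHnorm (m : ℕ) (y : Fin m → ℝ) : ℝ[X] →ₗ[ℝ] ℝ where
  toFun q := ∑ r ∈ range (m + 1), q.coeff r * Hnorm m y r
  map_add' q q' := by simp only [coeff_add, add_mul, sum_add_distrib]
  map_smul' c q := by simp only [coeff_smul, smul_eq_mul, mul_assoc, ← mul_sum, RingHom.id_apply]

theorem umbralHnorm_apply (y : Fin m → ℝ) (q : ℝ[X]) :
    umbralHnorm m y q = ∑ r ∈ range (m + 1), q.coeff r * Hnorm m y r :=
  rfl

theorem umbralHnorm_X_add_one_pow (y : Fin m → ℝ) {j : ℕ} (hj : j ≤ m) :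
    umbralHnorm m y ((X + 1) ^ j) = Hnorm m (fun p => y p + 1) j := by
  simp only [umbralHnorm_apply, coeff_X_add_one_pow, Hnorm_add_one y hj]

theorem umbralHnorm_X_mul (y : Fin m → ℝ) (q : ℝ[X]) :
    umbralHnorm m y (X * q) = ∑ r ∈ range (m + 1), q.coeff r * Hnorm m y (r + 1) := by
  rw [umbralHnorm_apply, sum_range_succ', sum_range_succ, Hnorm_eq_zero y (Nat.lt_succ_self m)]
  simp [coeff_X_mul]

noncomputable def ltilPoly (k : ℕ) : ℝ[X] := ((X + 1) ^ 2 - 1) ^ k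

theorem umbralHnorm_X_add_one_pow_mul_ltilPoly (y : Fin m → ℝ) {c k : ℕ} (h : 2 * k + c ≤ m) :
    umbralHnorm m y ((X + 1) ^ c * ltilPoly k) = ∑ i ∈ range (k + 1),
      (k.choose i : ℝ) * (-1) ^ (k - i) * Hnorm m (fun p => y p + 1) (2 * i + c) := by
  rw [ltilPoly, sub_eq_add_neg, add_pow ((X + 1 : ℝ[X]) ^ 2), mul_sum, map_sum]
  refine sum_congr rfl fun i hi => ?_
  have hi : 2 * i + c ≤ m := by rw [mem_range] at hi; omega
  have : (X + 1) ^ c * (((X + 1) ^ 2) ^ i * (-1) ^ (k - i) * (k.choose i : ℝ[X]))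
      = ((k.choose i : ℝ) * (-1) ^ (k - i)) • (X + 1) ^ (2 * i + c) := by
    rw [smul_eq_C_mul, pow_add, pow_mul]
    simp only [map_mul, map_pow, map_neg, map_one, map_natCast]
    ring
  rw [this, map_smul, smul_eq_mul, umbralHnorm_X_add_one_pow y hi]

theorem Ltil_add_one (y : Fin m → ℝ) {k : ℕ} (h : 2 * k ≤ m) :
    Ltil m (fun p => y p + 1) k = umbralHnorm m y (ltilPoly k) := by
  simpa [Ltil] using (umbralHnorm_X_add_one_pow_mul_ltilPoly y (c := 0) h).symm

theorem Ntil_add_one (y : Fin m → ℝ) {k : ℕ} (h : 2 * k + 1 ≤ m) :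
    Ntil m (fun p => y p + 1) k = umbralHnorm m y ((X + 1) * ltilPoly k) := by
  simpa [Ntil] using (umbralHnorm_X_add_one_pow_mul_ltilPoly y (c := 1) h).symm

end Umbral

theorem Nat.choose_mul_choose_le_of_le {a b i j d : ℕ} (hji : j ≤ i) (hab : a + j ≤ b + i) :
    a.choose (i + d) * b.choose j ≤ a.choose i * b.choose (j + d) := by
  induction d with
  | zero => rfl
  | succ d ih =>
    rcases le_or_gt a (i + d) with had | had
    · rw [Nat.choose_eq_zero_of_lt (by omega : a < i + (d + 1)), zero_mul]
      exact Nat.zero_le _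
    have hpos : 0 < (i + d + 1) * (j + d + 1) := by positivity
    refine Nat.le_of_mul_le_mul_right ?_ hpos
    calc a.choose (i + d + 1) * b.choose j * ((i + d + 1) * (j + d + 1))
        = a.choose (i + d + 1) * (i + d + 1) * b.choose j * (j + d + 1) := by ring
      _ = a.choose (i + d) * b.choose j * ((a - (i + d)) * (j + d + 1)) := by
          rw [Nat.choose_succ_right_eq]; ring
      _ ≤ a.choose i * b.choose (j + d) * ((b - (j + d)) * (i + d + 1)) :=
          Nat.mul_le_mul ih (Nat.mul_le_mul (by omega) (by omega))
      _ = a.choose i * (b.choose (j + d + 1) * (j + d + 1)) * (i + d + 1) := by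
          rw [Nat.choose_succ_right_eq]; ring
      _ = a.choose i * b.choose (j + d + 1) * ((i + d + 1) * (j + d + 1)) := by ring

theorem ltilPoly_eq (k : ℕ) : ltilPoly k = X ^ k * (X + C 2) ^ k := by
  rw [ltilPoly, ← mul_pow, C_ofNat]
  ring

theorem coeff_ltilPoly (k r : ℕ) :
    (ltilPoly k).coeff r = if k ≤ r then (k.choose (r - k) : ℝ) * 2 ^ (2 * k - r) else 0 := by
  rw [ltilPoly_eq, coeff_X_pow_mul']
  split_ifs with h
  · rw [coeff_X_add_C_pow, show k - (r - k) = 2 * k - r by omega, mul_comm]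
  · rfl

theorem coeff_ltilPoly_nonneg (k r : ℕ) : 0 ≤ (ltilPoly k).coeff r := by
  rw [coeff_ltilPoly]
  split_ifs <;> positivity

theorem coeff_ltilPoly_mul_le {a b r s : ℕ} (hab : a ≤ b) (hrs : r ≤ s) :
    (ltilPoly a).coeff s * (ltilPoly b).coeff r ≤ (ltilPoly a).coeff r * (ltilPoly b).coeff s := by
  by_cases h : a ≤ s ∧ b ≤ r ∧ s ≤ 2 * a
  swap
  · have : (ltilPoly a).coeff s * (ltilPoly b).coeff r = 0 := by
      rw [coeff_ltilPoly, coeff_ltilPoly]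
      split_ifs
      · rw [Nat.choose_eq_zero_of_lt (by omega : a < s - a)]
        simp
      all_goals simp
    rw [this]
    exact mul_nonneg (coeff_ltilPoly_nonneg a r) (coeff_ltilPoly_nonneg b s)
  obtain ⟨has, hbr, hsa⟩ := h
  rw [coeff_ltilPoly, coeff_ltilPoly, coeff_ltilPoly, coeff_ltilPoly, if_pos has, if_pos hbr,
    if_pos (by omega), if_pos (by omega)]
  have hchoose := Nat.choose_mul_choose_le_of_le (a := a) (b := b) (i := r - a) (j := r - b)
    (d := s - r) (by omega) (by omega)
  rw [show r - a + (s - r) = s - a by omega, show r - b + (s - r) = s - b by omega] at hchoose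
  have hpow : (2 : ℝ) ^ (2 * a - s) * 2 ^ (2 * b - r) = 2 ^ (2 * a - r) * 2 ^ (2 * b - s) := by
    rw [← pow_add, ← pow_add]
    congr 1
    omega
  calc (a.choose (s - a) : ℝ) * 2 ^ (2 * a - s) * ((b.choose (r - b) : ℝ) * 2 ^ (2 * b - r))
      = ((a.choose (s - a) * b.choose (r - b) : ℕ) : ℝ) * (2 ^ (2 * a - s) * 2 ^ (2 * b - r)) := by
        push_cast; ring
    _ ≤ ((a.choose (r - a) * b.choose (s - b) : ℕ) : ℝ) * (2 ^ (2 * a - s) * 2 ^ (2 * b - r)) := by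
        gcongr
    _ = _ := by
        rw [hpow]; push_cast; ring

/-- Both factors of each symmetrized term `(A_i B_j - A_j B_i) (v_i u_j - u_i v_j)` have the
sign of `j - i`. -/
theorem sum_mul_sum_le_sum_mul_sum_of_tp2 {ι : Type*} [LinearOrder ι] (s : Finset ι)
    {A B u v : ι → ℝ} (hAB : ∀ i j, i ≤ j → A j * B i ≤ A i * B j)
    (huv : ∀ i j, i ≤ j → u i * v j ≤ v i * u j) :
    (∑ i ∈ s, B i * v i) * (∑ i ∈ s, A i * u i) ≤ (∑ i ∈ s, A i * v i) * (∑ i ∈ s, B i * u i) := by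
  set F : ι → ι → ℝ := fun i j => A i * v i * (B j * u j) - B i * v i * (A j * u j)
  have hF : (∑ i ∈ s, A i * v i) * (∑ i ∈ s, B i * u i)
      - (∑ i ∈ s, B i * v i) * (∑ i ∈ s, A i * u i) = ∑ i ∈ s, ∑ j ∈ s, F i j := by
    simp only [F, sum_mul_sum, ← sum_sub_distrib]
  have hsymm : 2 * ∑ i ∈ s, ∑ j ∈ s, F i j = ∑ i ∈ s, ∑ j ∈ s, (F i j + F j i) := by
    rw [two_mul]
    nth_rewrite 2 [sum_comm]
    simp only [← sum_add_distrib]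
  have hterm : ∀ i j, 0 ≤ F i j + F j i := by
    intro i j
    have : F i j + F j i = (A i * B j - A j * B i) * (v i * u j - u i * v j) := by ring
    rw [this]
    rcases le_total i j with hij | hji
    · exact mul_nonneg (sub_nonneg.2 (hAB i j hij)) (sub_nonneg.2 (huv i j hij))
    · exact mul_nonneg_of_nonpos_of_nonpos (sub_nonpos.2 (hAB j i hji))
        (by linarith [huv j i hji])
  have : 0 ≤ 2 * ∑ i ∈ s, ∑ j ∈ s, F i j := by
    rw [hsymm]
    exact sum_nonneg fun i _ => sum_nonneg fun j _ => hterm i j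
  linarith

theorem Ntil_mul_Ltil_le {m a b : ℕ} {κ : Fin m → ℝ} (hκ : ∀ p, 1 ≤ κ p) (hab : a ≤ b)
    (hb : 2 * b + 1 ≤ m) : Ntil m κ b * Ltil m κ a ≤ Ntil m κ a * Ltil m κ b := by
  set y : Fin m → ℝ := fun p => κ p - 1
  have hy : ∀ p, 0 ≤ y p := fun p => sub_nonneg.2 (hκ p)
  have hκy : κ = fun p => y p + 1 := by simp [y]
  rw [hκy, Ltil_add_one y (k := a) (by omega), Ltil_add_one y (k := b) (by omega),
    Ntil_add_one y (k := a) (by omega), Ntil_add_one y hb]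
  rw [add_mul, add_mul, one_mul, one_mul, map_add, map_add, umbralHnorm_X_mul, umbralHnorm_X_mul,
    umbralHnorm_apply, umbralHnorm_apply]
  have := sum_mul_sum_le_sum_mul_sum_of_tp2 (range (m + 1)) (fun _ _ => coeff_ltilPoly_mul_le hab)
    (fun _ _ => Hnorm_mul_Hnorm_succ_le hy)
  linarith

theorem sum_mul_le_sum_mul_of_cross {ι : Type*} {s t : Finset ι} {a b L N : ι → ℝ}
    (ha : ∀ i ∈ s, 0 ≤ a i) (hb : ∀ j ∈ t, 0 ≤ b j)
    (hNL : ∀ i ∈ s, ∀ j ∈ t, N j * L i ≤ N i * L j)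
    (heq : ∑ i ∈ s, a i * L i = ∑ j ∈ t, b j * L j) (hpos : 0 < ∑ j ∈ t, b j * L j) :
    ∑ j ∈ t, b j * N j ≤ ∑ i ∈ s, a i * N i := by
  refine le_of_mul_le_mul_right ?_ hpos
  calc (∑ j ∈ t, b j * N j) * ∑ j ∈ t, b j * L j
      = (∑ i ∈ s, a i * L i) * ∑ j ∈ t, b j * N j := by rw [heq, mul_comm]
    _ = ∑ i ∈ s, ∑ j ∈ t, a i * b j * (N j * L i) := by
        rw [sum_mul_sum]
        exact sum_congr rfl fun _ _ => sum_congr rfl fun _ _ => by ring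
    _ ≤ ∑ i ∈ s, ∑ j ∈ t, a i * b j * (N i * L j) :=
        sum_le_sum fun i hi => sum_le_sum fun j hj =>
          mul_le_mul_of_nonneg_left (hNL i hi j hj) (mul_nonneg (ha i hi) (hb j hj))
    _ = (∑ i ∈ s, a i * N i) * ∑ j ∈ t, b j * L j := by
        rw [sum_mul_sum]
        exact sum_congr rfl fun _ _ => sum_congr rfl fun _ _ => by ring

theorem stmt_15_general (n : ℕ) (l k : ℕ)
    (hk : 2 * k + 1 ≤ n - 1)
    (kap : Fin (n - 1) → ℝ) (hkap : ∀ p, 1 ≤ kap p)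
    (a b : ℕ → ℝ)
    (ha : ∀ i ∈ Finset.range l, 0 ≤ a i)
    (hb : ∀ j ∈ Finset.Icc l k, 0 ≤ b j)
    (heq : ∑ i ∈ Finset.range l, a i * Ltil (n - 1) kap i =
           ∑ j ∈ Finset.Icc l k, b j * Ltil (n - 1) kap j)
    (hpos : 0 < ∑ j ∈ Finset.Icc l k, b j * Ltil (n - 1) kap j) :
    ∑ j ∈ Finset.Icc l k, b j * Ntil (n - 1) kap j ≤
      ∑ i ∈ Finset.range l, a i * Ntil (n - 1) kap i := by
  refine sum_mul_le_sum_mul_of_cross ha hb (fun i hi j hj => ?_) heq hpos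
  rw [mem_range] at hi
  rw [mem_Icc] at hj
  exact Ntil_mul_Ltil_le hkap (by omega) (by omega)

/-- If `κ_p ≥ 1` for all `p`, `1 ≤ l < k`, `2k+1 ≤ n−1`, and nonnegative constants satisfy
`Σ_{i=0}^{l−1} ã_i L̃_i = Σ_{j=l}^{k} b̃_j L̃_j > 0`, then
`Σ_{i=0}^{l−1} ã_i Ñ_i ≥ Σ_{j=l}^{k} b̃_j Ñ_j`. -/
theorem stmt_15 (n : ℕ) (hn : 3 ≤ n) (l k : ℕ) (hl : 1 ≤ l) (hlk : l < k)
    (hk : 2 * k + 1 ≤ n - 1)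
    (kap : Fin (n - 1) → ℝ) (hkap : ∀ p, 1 ≤ kap p)
    (a b : ℕ → ℝ)
    (ha : ∀ i ∈ Finset.range l, 0 ≤ a i)
    (hb : ∀ j ∈ Finset.Icc l k, 0 ≤ b j)
    (heq : ∑ i ∈ Finset.range l, a i * Ltil (n - 1) kap i =
           ∑ j ∈ Finset.Icc l k, b j * Ltil (n - 1) kap j)
    (hpos : 0 < ∑ j ∈ Finset.Icc l k, b j * Ltil (n - 1) kap j) :
    ∑ j ∈ Finset.Icc l k, b j * Ntil (n - 1) kap j ≤
      ∑ i ∈ Finset.range l, a i * Ntil (n - 1) kap i :=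
  stmt_15_general n l k hk kap hkap a b ha hb heq hpos
end

section
/- Let n ≥ 3 and let s ≥ 1, t ≥ 0 be integers. For λ ∈ ℝ^{n−1} and integers s' ≥ 0, define Y_{s',t}(λ) = Σ_{i=0}^{t} C(t,i) H_{s'+2t−2i}(λ). If λ satisfies σ_m(λ) ≥ 0 for all 1 ≤ m ≤ min(s+2t+2, n−1), then Y_{s,t}(λ)·Y_{s+1,t}(λ) ≥ Y_{s−1,t}(λ)·Y_{s+2,t}(λ). -/
/-- `Y_{s,t}(λ) = Σ_{i=0}^{t} C(t,i) H_{s+2t−2i}(λ)`. -/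
noncomputable def Yst (m : ℕ) (x : Fin m → ℝ) (s t : ℕ) : ℝ :=
  ∑ i ∈ Finset.range (t + 1), (t.choose i : ℝ) * Hnorm m x (s + 2 * t - 2 * i)

/-!
Newton's inequalities `H_k H_{k+2} ≤ H_{k+1}²` hold for every real vector: differentiating
`∏ (X + λ_i)` keeps it real-rooted (Rolle) and keeps the `H_j`, which reduces to `k + 2`
variables, and passing to the reciprocals reduces further to `H₂ ≤ H₁²` in two variables.
Shifting `λ` by `ε > 0` makes `σ_1, …, σ_{s+2t+2}` positive (Taylor expansion), so `H_0, H_1, …`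
is log-concave without internal zeros up to that index, whence `H_a H_c ≤ H_{a+1} H_{c-1}` for
`a < c`. As `Y_{s,t+1} = Y_{s,t} + Y_{s+2,t}`, the instances with `c - a` odd pass from `H` to
`Y_{·,t}` by induction on `t`; the instance `c = a + 3` is the claim for `λ + ε`, and `ε → 0`
gives it for `λ`.
-/

open Multiset Polynomial

namespace Multiset

section CommSemiring

variable {R : Type*} [CommSemiring R]

theorem esymm_zero (s : Multiset R) : s.esymm 0 = 1 := by
  simp [esymm]

theorem esymm_eq_zero_of_card_lt (s : Multiset R) {j : ℕ} (h : card s < j) : s.esymm j = 0 := by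
  simp [esymm, powersetCard_eq_empty _ h]

theorem esymm_cons_succ (a : R) (s : Multiset R) (k : ℕ) :
    (a ::ₘ s).esymm (k + 1) = s.esymm (k + 1) + a * s.esymm k := by
  simp [esymm, powersetCard_cons, map_map, sum_map_mul_left]

theorem esymm_card (s : Multiset R) : s.esymm (card s) = s.prod := by
  induction s using Multiset.induction with
  | empty => simp [esymm_zero]
  | cons a s ih =>
    rw [card_cons, esymm_cons_succ, esymm_eq_zero_of_card_lt s (Nat.lt_succ_self _), ih, prod_cons,
      zero_add]

end CommSemiring

theorem esymm_map_inv_mul_prod {K : Type*} [Field K] {s : Multiset K} (h0 : (0 : K) ∉ s) :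
    ∀ j k, j + k = card s → (s.map (·⁻¹)).esymm j * s.prod = s.esymm k := by
  induction s using Multiset.induction with
  | empty =>
    intro j k hjk
    obtain ⟨rfl, rfl⟩ : j = 0 ∧ k = 0 := by simpa using hjk
    simp [esymm_zero]
  | cons a s ih =>
    have ha : a ≠ 0 := fun h => h0 (h ▸ mem_cons_self a s)
    replace ih := ih fun h => h0 (mem_cons_of_mem h)
    intro j k hjk
    rw [card_cons] at hjk
    rw [map_cons, prod_cons]
    match j, k with
    | 0, k =>
      obtain rfl : k = card s + 1 := by omega
      rw [esymm_zero, ← card_cons a s, esymm_card, prod_cons, one_mul]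
    | j + 1, 0 =>
      have h := ih j 0 (by omega)
      rw [esymm_zero] at h
      rw [esymm_cons_succ, esymm_eq_zero_of_card_lt _ (by simp; omega), esymm_zero]
      linear_combination h + (map (·⁻¹) s).esymm j * s.prod * inv_mul_cancel₀ ha
    | j + 1, k + 1 =>
      have h1 := ih (j + 1) k (by omega)
      have h2 := ih j (k + 1) (by omega)
      rw [esymm_cons_succ, esymm_cons_succ]
      linear_combination a * h1 + h2 + (map (·⁻¹) s).esymm j * s.prod * inv_mul_cancel₀ ha

noncomputable def normEsymm (s : Multiset ℝ) (j : ℕ) : ℝ :=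
  s.esymm j / ((card s).choose j : ℝ)

/-- `s` is minus the roots of the derivative of `∏ (X + a)`, `a ∈ r`, all real by Rolle. -/
theorem exists_esymm_derivative (r : Multiset ℝ) (hr : r ≠ 0) :
    ∃ s : Multiset ℝ, card s + 1 = card r ∧
      ∀ j ≤ card s, (card r : ℝ) * s.esymm j = ((card r : ℝ) - j) * r.esymm j := by
  set p : ℝ[X] := (r.map fun a => X + C a).prod with hp
  have hp_eq : p = ((r.map Neg.neg).map fun a => X - C a).prod := by
    simp [hp, map_map, sub_neg_eq_add]
  have hdeg : p.natDegree = card r := by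
    rw [hp_eq, natDegree_multiset_prod_X_sub_C_eq_card, card_map]
  have hcard : 1 ≤ card r := card_pos.mpr hr
  have hdeg' : p.derivative.natDegree = card r - 1 := by
    have h := degree_derivative (p := p) (by omega)
    rw [hdeg] at h
    exact natDegree_eq_of_degree_eq_some h
  have hroots : card p.derivative.roots = p.derivative.natDegree := by
    have h1 := card_roots_le_derivative p
    have h2 := card_roots' p.derivative
    rw [hp_eq, roots_multiset_prod_X_sub_C, card_map, ← hp_eq] at h1
    omega
  have hlead : p.derivative.leadingCoeff = card r := by
    rw [leadingCoeff, hdeg', coeff_derivative, Nat.sub_add_cancel hcard,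
      show p.coeff (card r) = 1 from hdeg ▸ (hp ▸ monic_multiset_prod_of_monic _ _
        fun a _ => monic_X_add_C a).coeff_natDegree, Nat.cast_sub hcard]
    ring
  set s := p.derivative.roots.map Neg.neg
  have hs : card s = card r - 1 := by rw [card_map, hroots, hdeg']
  have hfactor : p.derivative = C (card r : ℝ) * (s.map fun a => X + C a).prod := by
    conv_lhs => rw [← C_leadingCoeff_mul_prod_multiset_X_sub_C hroots]
    simp [s, hlead, map_map, sub_eq_add_neg]
  refine ⟨s, by omega, fun j hj => ?_⟩
  have hcoeff := congrArg (coeff · (card r - 1 - j)) hfactor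
  simp only [coeff_derivative, coeff_C_mul] at hcoeff
  rw [hp, prod_X_add_C_coeff _ (by omega), prod_X_add_C_coeff _ (by omega), hs,
    show card r - (card r - 1 - j + 1) = j by omega, show card r - 1 - (card r - 1 - j) = j by omega,
    show ((card r - 1 - j : ℕ) : ℝ) + 1 = card r - j by
      rw [Nat.cast_sub (by omega), Nat.cast_sub hcard]; ring] at hcoeff
  linear_combination -hcoeff

theorem normEsymm_card (s : Multiset ℝ) : normEsymm s (card s) = s.prod := by
  simp [normEsymm, esymm_card]

theorem normEsymm_of_card_lt (s : Multiset ℝ) {j : ℕ} (h : card s < j) : normEsymm s j = 0 := by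
  simp [normEsymm, Nat.choose_eq_zero_of_lt h]

theorem exists_normEsymm_eq_of_card_succ (r : Multiset ℝ) (hr : r ≠ 0) :
    ∃ s : Multiset ℝ, card s + 1 = card r ∧ ∀ j ≤ card s, normEsymm s j = normEsymm r j := by
  obtain ⟨s, hs, hesymm⟩ := exists_esymm_derivative r hr
  refine ⟨s, hs, fun j hj => ?_⟩
  have hchoose := Nat.choose_mul_succ_eq (card s) j
  rw [← Nat.cast_inj (R := ℝ)] at hchoose
  push_cast [Nat.cast_sub (show j ≤ card s + 1 by omega)] at hchoose
  have hpos : (0 : ℝ) < (card s).choose j := by exact_mod_cast Nat.choose_pos hj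
  have hpos' : (0 : ℝ) < (card s + 1).choose j := by exact_mod_cast Nat.choose_pos (by omega)
  rw [← hs] at hesymm
  push_cast at hesymm
  rw [normEsymm, normEsymm, ← hs, div_eq_div_iff hpos.ne' hpos'.ne']
  apply mul_left_cancel₀ (show (card s + 1 : ℝ) ≠ 0 by positivity)
  linear_combination ((card s + 1).choose j : ℝ) * hesymm j hj - r.esymm j * hchoose

theorem exists_normEsymm_eq_of_le_card (r : Multiset ℝ) {c : ℕ} (hc : c ≤ card r) :
    ∃ s : Multiset ℝ, card s = c ∧ ∀ j ≤ c, normEsymm s j = normEsymm r j := by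
  obtain ⟨n, hn⟩ := Nat.exists_eq_add_of_le hc
  induction n generalizing r with
  | zero => exact ⟨r, hn, fun _ _ => rfl⟩
  | succ n ih =>
    obtain ⟨s, hs, hrs⟩ := exists_normEsymm_eq_of_card_succ r (card_pos.mp (by omega))
    obtain ⟨u, hu, hsu⟩ := ih s (by omega) (by omega)
    exact ⟨u, hu, fun j hj => (hsu j hj).trans (hrs j (by omega))⟩

theorem normEsymm_map_inv_mul_prod {s : Multiset ℝ} (h0 : (0 : ℝ) ∉ s) {j : ℕ}
    (hj : j ≤ card s) : normEsymm (s.map (·⁻¹)) j * s.prod = normEsymm s (card s - j) := by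
  rw [normEsymm, normEsymm, card_map, Nat.choose_symm hj, div_mul_eq_mul_div,
    esymm_map_inv_mul_prod h0 j (card s - j) (by omega)]

theorem normEsymm_two_le_sq (s : Multiset ℝ) (hs : 2 ≤ card s) :
    normEsymm s 2 ≤ normEsymm s 1 ^ 2 := by
  obtain ⟨u, hu, hsu⟩ := exists_normEsymm_eq_of_le_card s hs
  obtain ⟨x, y, rfl⟩ := card_eq_two.mp hu
  have hxy : x * y ≤ ((x + y) / 2) ^ 2 := by nlinarith [sq_nonneg (x - y)]
  rw [← hsu 1 one_le_two, ← hsu 2 le_rfl]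
  simpa [normEsymm] using hxy

theorem normEsymm_mul_le_sq_of_card_eq {s : Multiset ℝ} {k : ℕ} (hs : card s = k + 2) :
    normEsymm s k * normEsymm s (k + 2) ≤ normEsymm s (k + 1) ^ 2 := by
  rw [← hs, normEsymm_card]
  by_cases h0 : (0 : ℝ) ∈ s
  · rw [prod_eq_zero h0, mul_zero]
    positivity
  -- Newton's inequality at the top index is `H₂ ≤ H₁²` for the reciprocals.
  have hv := normEsymm_two_le_sq (s.map (·⁻¹)) (by simp [hs])
  have h2 := normEsymm_map_inv_mul_prod h0 (j := 2) (by omega)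
  have h1 := normEsymm_map_inv_mul_prod h0 (j := 1) (by omega)
  rw [hs, show k + 2 - 2 = k by omega] at h2
  rw [hs, show k + 2 - 1 = k + 1 by omega] at h1
  rw [← h1, ← h2]
  nlinarith [mul_le_mul_of_nonneg_right hv (sq_nonneg s.prod)]

theorem normEsymm_mul_le_sq (s : Multiset ℝ) (k : ℕ) :
    normEsymm s k * normEsymm s (k + 2) ≤ normEsymm s (k + 1) ^ 2 := by
  rcases lt_or_ge (card s) (k + 2) with hlt | hle
  · rw [normEsymm_of_card_lt s hlt, mul_zero]
    positivity
  obtain ⟨u, hu, hsu⟩ := exists_normEsymm_eq_of_le_card s hle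
  rw [← hsu k (by omega), ← hsu (k + 1) (by omega), ← hsu (k + 2) le_rfl]
  exact normEsymm_mul_le_sq_of_card_eq hu

theorem esymm_map_add_const {R : Type*} [CommSemiring R] (r : Multiset R) {j : ℕ}
    (hj : j ≤ card r) (ε : R) :
    (r.map (· + ε)).esymm j = ∑ n ∈ Finset.range (j + 1),
      ((n + (card r - j)).choose (card r - j) : R) * r.esymm (j - n) * ε ^ n := by
  set P : R[X] := (r.map fun a => X + C a).prod
  have htaylor : ((r.map (· + ε)).map fun a => X + C a).prod = taylor ε P := by
    rw [taylor_apply, multiset_prod_comp, map_map, map_map]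
    refine congrArg _ (map_congr rfl fun a _ => ?_)
    simp only [Function.comp_apply, add_comp, X_comp, C_comp, C_add]
    ring
  have hdeg : (hasseDeriv (card r - j) P).natDegree < j + 1 := by
    have h := natDegree_hasseDeriv_le P (card r - j)
    have hP : P.natDegree ≤ card r := by
      refine (natDegree_multiset_prod_le _).trans ?_
      simpa using Nat.mul_le_mul_left (card r) natDegree_X_le
    omega
  have hcoeff : (r.map (· + ε)).esymm j = (taylor ε P).coeff (card r - j) := by
    rw [← htaylor, prod_X_add_C_coeff _ (by simp), card_map, Nat.sub_sub_self hj]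
  rw [hcoeff, taylor_coeff, eval_eq_sum_range' hdeg]
  refine Finset.sum_congr rfl fun n hn => ?_
  rw [hasseDeriv_coeff, prod_X_add_C_coeff _ (by simp at hn; omega),
    show card r - (n + (card r - j)) = j - n by omega]

theorem esymm_map_add_pos {r : Multiset ℝ} {j : ℕ} (hj : j ≤ card r)
    (hr : ∀ i ≤ j, 0 ≤ r.esymm i) {ε : ℝ} (hε : 0 < ε) : 0 < (r.map (· + ε)).esymm j := by
  rw [esymm_map_add_const r hj]
  refine Finset.sum_pos' (fun n hn => ?_) ⟨j, by simp, ?_⟩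
  · have := hr (j - n) (Nat.sub_le j n)
    positivity
  · have : (0 : ℝ) < (j + (card r - j)).choose (card r - j) := by
      exact_mod_cast Nat.choose_pos (Nat.le_add_left _ _)
    rw [Nat.sub_self, esymm_zero]
    positivity

end Multiset

theorem esymmR_eq_esymm (m : ℕ) (x : Fin m → ℝ) (k : ℕ) :
    esymmR m x k = (Finset.univ.val.map x).esymm k :=
  (Finset.esymm_map_val x Finset.univ k).symm

theorem Hnorm_eq_normEsymm (m : ℕ) (x : Fin m → ℝ) (k : ℕ) :
    Hnorm m x k = normEsymm (Finset.univ.val.map x) k := by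
  simp [Hnorm, normEsymm, esymmR_eq_esymm]

theorem Hnorm_of_lt (m : ℕ) (x : Fin m → ℝ) {k : ℕ} (h : m < k) : Hnorm m x k = 0 := by
  rw [Hnorm_eq_normEsymm, normEsymm_of_card_lt _ (by simpa using h)]

theorem Hnorm_mul_le_sq (m : ℕ) (x : Fin m → ℝ) (k : ℕ) :
    Hnorm m x k * Hnorm m x (k + 2) ≤ Hnorm m x (k + 1) ^ 2 := by
  simpa only [Hnorm_eq_normEsymm] using normEsymm_mul_le_sq _ k

theorem Hnorm_add_const_pos {m : ℕ} {x : Fin m → ℝ} {j : ℕ} (hj : j ≤ m)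
    (hx : ∀ i ≤ j, 0 ≤ esymmR m x i) {ε : ℝ} (hε : 0 < ε) :
    0 < Hnorm m (fun i => x i + ε) j := by
  have hpos := esymm_map_add_pos (r := Finset.univ.val.map x) (by simpa using hj)
    (fun i hi => esymmR_eq_esymm m x i ▸ hx i hi) hε
  rw [Multiset.map_map] at hpos
  exact div_pos (esymmR_eq_esymm m _ j ▸ hpos) (by exact_mod_cast Nat.choose_pos hj)

/-- The inequalities `f a * f c ≤ f (a + 1) * f (c - 1)` with `c - a ≥ 3` odd, satisfied by a
log-concave sequence without internal zeros. Unlike the whole family (which contains Newton's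
inequalities, `c = a + 2`), they survive `f ↦ f + f (· + 2)`. -/
def OddGapLogConcave (B : ℕ) (f : ℕ → ℝ) : Prop :=
  ∀ a d, a + 2 * d + 3 ≤ B → f a * f (a + 2 * d + 3) ≤ f (a + 1) * f (a + 2 * d + 2)

theorem oddGapLogConcave_of_newton {B : ℕ} {f : ℕ → ℝ} (hnonneg : ∀ k ≤ B, 0 ≤ f k)
    (hzero : ∀ k < B, f k = 0 → f (k + 1) = 0)
    (hnewton : ∀ k, k + 2 ≤ B → f k * f (k + 2) ≤ f (k + 1) ^ 2) :
    OddGapLogConcave B f := by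
  suffices h : ∀ d a, a + d + 2 ≤ B → f a * f (a + d + 2) ≤ f (a + 1) * f (a + d + 1) from
    fun a d hd => h (2 * d + 1) a (by omega)
  intro d
  induction d with
  | zero => intro a ha; simpa [sq] using hnewton a ha
  | succ d ih =>
    intro a ha
    have hprev := ih a (by omega)
    rcases (hnonneg (a + d + 1) (by omega)).eq_or_lt with hz | hpos
    · have hz2 := hzero _ (by omega) hz.symm
      have hz3 := hzero _ (by omega) hz2
      rw [show a + (d + 1) + 2 = a + d + 1 + 1 + 1 by omega, hz3, mul_zero]
      exact mul_nonneg (hnonneg _ (by omega)) (hnonneg _ (by omega))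
    · have hN := hnewton (a + d + 1) (by omega)
      refine le_of_mul_le_mul_left ?_ hpos
      rw [show a + (d + 1) + 2 = a + d + 1 + 2 by omega, show a + (d + 1) + 1 = a + d + 1 + 1 by omega]
      nlinarith [mul_le_mul_of_nonneg_left hN (hnonneg a (by omega)),
        mul_le_mul_of_nonneg_right hprev (hnonneg (a + d + 1 + 1) (by omega))]

theorem OddGapLogConcave.add_shift_two {B : ℕ} {f : ℕ → ℝ} (h : OddGapLogConcave (B + 2) f) :
    OddGapLogConcave B fun a => f a + f (a + 2) := by
  intro a d hd
  have h1 := h a d (by omega)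
  have h2 := h a (d + 1) (by omega)
  have h3 := h (a + 2) d (by omega)
  have h4 : f (a + 2) * f (a + 2 * d + 3) ≤ f (a + 3) * f (a + 2 * d + 2) := by
    rcases d with _ | d
    · exact (mul_comm _ _).le
    · convert h (a + 2) d (by omega) using 3 <;> omega
  simp only [show a + 2 * (d + 1) + 3 = a + 2 * d + 3 + 2 by ring,
    show a + 2 * (d + 1) + 2 = a + 2 * d + 2 + 2 by ring,
    show a + 2 + 2 * d + 3 = a + 2 * d + 3 + 2 by ring,
    show a + 2 + 2 * d + 2 = a + 2 * d + 2 + 2 by ring] at h2 h3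
  linear_combination h1 + h2 + h3 + h4

theorem Yst_eq_sum (m : ℕ) (x : Fin m → ℝ) (s t : ℕ) :
    Yst m x s t = ∑ i ∈ Finset.range (t + 1), (t.choose i : ℝ) * Hnorm m x (s + 2 * (t - i)) :=
  Finset.sum_congr rfl fun i hi => by
    rw [Finset.mem_range] at hi
    rw [show s + 2 * t - 2 * i = s + 2 * (t - i) by omega]

theorem Yst_succ (m : ℕ) (x : Fin m → ℝ) (s t : ℕ) :
    Yst m x s (t + 1) = Yst m x s t + Yst m x (s + 2) t := by
  rw [Yst_eq_sum, Finset.sum_choose_succ_mul (fun _ k => Hnorm m x (s + 2 * k)), add_comm,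
    Yst_eq_sum, Yst_eq_sum]
  congr 1
  refine Finset.sum_congr rfl fun i hi => ?_
  rw [Finset.mem_range] at hi
  rw [show s + 2 * (t + 1 - i) = s + 2 + 2 * (t - i) by omega]

theorem oddGapLogConcave_Yst {m : ℕ} {x : Fin m → ℝ} {B t : ℕ}
    (h : OddGapLogConcave (B + 2 * t) (Hnorm m x)) : OddGapLogConcave B fun a => Yst m x a t := by
  induction t generalizing B with
  | zero => simpa [Yst] using h
  | succ t ih =>
    simp only [Yst_succ]
    exact (ih (B := B + 2) (by rwa [show B + 2 + 2 * t = B + 2 * (t + 1) by ring])).add_shift_two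

theorem oddGapLogConcave_Hnorm_add_const {m B : ℕ} {x : Fin m → ℝ}
    (hx : ∀ i, 1 ≤ i → i ≤ min B m → 0 ≤ esymmR m x i) {ε : ℝ} (hε : 0 < ε) :
    OddGapLogConcave B (Hnorm m fun i => x i + ε) := by
  have hpos : ∀ k ≤ B, k ≤ m → 0 < Hnorm m (fun i => x i + ε) k := fun k hkB hkm =>
    Hnorm_add_const_pos hkm (fun i hi => by
      rcases Nat.eq_zero_or_pos i with rfl | hi0
      · simp [esymmR_eq_esymm, esymm_zero]
      · exact hx i hi0 (by omega)) hε
  refine oddGapLogConcave_of_newton (fun k hk => ?_) (fun k hk hk0 => ?_)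
    (fun k _ => Hnorm_mul_le_sq m _ k)
  · rcases le_or_gt k m with hkm | hkm
    · exact (hpos k hk hkm).le
    · rw [Hnorm_of_lt m _ hkm]
  · exact Hnorm_of_lt m _ (by by_contra! hkm; exact (hpos k hk.le (by omega)).ne' hk0)

theorem continuous_Yst_add_const (m : ℕ) (x : Fin m → ℝ) (s t : ℕ) :
    Continuous fun ε : ℝ => Yst m (fun i => x i + ε) s t := by
  unfold Yst Hnorm esymmR
  fun_prop

open Filter Topology

theorem stmt_16_general (n : ℕ) (s t : ℕ) (hs : 1 ≤ s)
    (lam : Fin (n - 1) → ℝ)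
    (hσ : ∀ m : ℕ, 1 ≤ m → m ≤ min (s + 2 * t + 2) (n - 1) → 0 ≤ esymmR (n - 1) lam m) :
    Yst (n - 1) lam (s - 1) t * Yst (n - 1) lam (s + 2) t ≤
      Yst (n - 1) lam s t * Yst (n - 1) lam (s + 1) t := by
  set Y : ℝ → ℕ → ℝ := fun ε a => Yst (n - 1) (fun i => lam i + ε) a t
  have hY : ∀ a, Continuous (Y · a) := fun a => continuous_Yst_add_const _ lam a t
  have hshift : ∀ ε > 0, Y ε (s - 1) * Y ε (s + 2) ≤ Y ε s * Y ε (s + 1) := fun ε hε => by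
    have h := oddGapLogConcave_Yst (B := s + 2) (t := t) (x := fun i => lam i + ε) (by
      rw [show s + 2 + 2 * t = s + 2 * t + 2 by ring]
      exact oddGapLogConcave_Hnorm_add_const hσ hε)
    simpa only [show s - 1 + 2 * 0 + 3 = s + 2 by omega, show s - 1 + 1 = s by omega,
      show s - 1 + 2 * 0 + 2 = s + 1 by omega] using h (s - 1) 0 (by omega)
  have hlim : ∀ a b, Tendsto (fun ε => Y ε a * Y ε b) (𝓝[>] 0) (𝓝 (Y 0 a * Y 0 b)) :=
    fun a b => (((hY a).mul (hY b)).tendsto 0).mono_left nhdsWithin_le_nhds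
  simpa [Y] using le_of_tendsto_of_tendsto (hlim (s - 1) (s + 2)) (hlim s (s + 1))
    (eventually_nhdsWithin_of_forall hshift)

/-- If `σ_m(λ) ≥ 0` for `1 ≤ m ≤ min(s+2t+2, n−1)`, then for `s ≥ 1`, `t ≥ 0`,
`Y_{s,t} Y_{s+1,t} ≥ Y_{s−1,t} Y_{s+2,t}`. -/
theorem stmt_16 (n : ℕ) (hn : 3 ≤ n) (s t : ℕ) (hs : 1 ≤ s)
    (lam : Fin (n - 1) → ℝ)
    (hσ : ∀ m : ℕ, 1 ≤ m → m ≤ min (s + 2 * t + 2) (n - 1) → 0 ≤ esymmR (n - 1) lam m) :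
    Yst (n - 1) lam (s - 1) t * Yst (n - 1) lam (s + 2) t ≤
      Yst (n - 1) lam s t * Yst (n - 1) lam (s + 1) t :=
  stmt_16_general n s t hs lam hσ
end
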